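/- arXiv:2006.13196 — 12 statements merged into one kernel-verified Lean document; each statement's English description precedes it below -/
import Mathlib

section
/- Let ψ : G → G be a fixed point free abelian endomorphism of a finite group G. Then the binary operation g ∘ h = g·ψ(g⁻¹)·h·ψ(g) makes G into a group with the same identity element 1_G. -/
theorem circ_group_structure {G : Type*} [Group G] [Fintype G] (ψ : G →* G)
    (hfpf : ∀ g : G, ψ g = g → g = 1)
    (hab : ∀ x y : G, ψ x * ψ y = ψ y * ψ x) :
    (∀ a b c : G,
        ((a * ψ a⁻¹ * b * ψ a) * ψ (a * ψ a⁻¹ * b * ψ a)⁻¹ * c * ψ (a * ψ a⁻¹ * b * ψ a))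
          = a * ψ a⁻¹ * (b * ψ b⁻¹ * c * ψ b) * ψ a) ∧
    (∀ a : G, (1 : G) * ψ (1 : G)⁻¹ * a * ψ (1 : G) = a) ∧
    (∀ a : G, a * ψ a⁻¹ * 1 * ψ a = a) ∧
    (∀ a : G, ∃ b : G, a * ψ a⁻¹ * b * ψ a = 1 ∧ b * ψ b⁻¹ * a * ψ b = 1) := by
  refine ⟨?_, ?_, ?_, ?_⟩
  · intro a b c
    have h1 : ψ (a * (ψ a)⁻¹ * b * ψ a) = ψ b * ψ a := by
      have c1 : Commute (ψ (ψ a)) (ψ b) := hab (ψ a) b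
      simp only [map_mul, map_inv]
      rw [mul_assoc (ψ a * (ψ (ψ a))⁻¹), ← c1.eq, ← mul_assoc]
      group
      exact hab a b
    simp only [map_inv]
    rw [h1]
    group
  · intro a; simp
  · intro a; simp [map_inv]
  · intro a
    have c1 : Commute (ψ (ψ a)) (ψ a) := hab (ψ a) a
    have hb : ψ (ψ a * a⁻¹ * (ψ a)⁻¹) = (ψ a)⁻¹ := by
      rw [map_mul, map_mul, map_inv, map_inv, c1.inv_right.eq]
      group
    refine ⟨ψ a * a⁻¹ * (ψ a)⁻¹, ?_, ?_⟩
    · simp only [map_inv]; group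
    · simp only [map_inv]
      rw [hb]
      group
end

section
/- Let ψ : G → G be a fixed point free abelian endomorphism of a finite group G, and define g ∘ h = g·ψ(g⁻¹)·h·ψ(g). Then the map φ : (G, ∘) → (G, ·) given by φ(g) = g·ψ(g⁻¹) is a group isomorphism. -/
theorem phi_isomorphism {G : Type*} [Group G] [Fintype G] (ψ : G →* G)
    (hfpf : ∀ g : G, ψ g = g → g = 1)
    (hab : ∀ x y : G, ψ x * ψ y = ψ y * ψ x) :
    Function.Bijective (fun g : G => g * ψ g⁻¹) ∧
    ∀ g h : G,
      (g * ψ g⁻¹ * h * ψ g) * ψ (g * ψ g⁻¹ * h * ψ g)⁻¹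
        = (g * ψ g⁻¹) * (h * ψ h⁻¹) := by
  constructor
  · apply Finite.injective_iff_bijective.mp
    intro a b hab'
    simp only [map_inv] at hab'
    -- hab' : a * (ψ a)⁻¹ = b * (ψ b)⁻¹
    have ha : a = b * (ψ b)⁻¹ * ψ a := by rw [← hab']; group
    have h1 : ψ (b⁻¹ * a) = b⁻¹ * a := by
      rw [map_mul, map_inv]
      conv_rhs => rw [ha]
      group
    have h2 := hfpf _ h1
    rw [inv_mul_eq_one] at h2
    exact h2.symm
  · intro g h
    have hkey : ψ g * (ψ (g * ψ g⁻¹ * h * ψ g))⁻¹ = (ψ h)⁻¹ := by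
      rw [map_mul, map_mul, map_mul, map_inv, map_inv]
      have e1 : ψ g * (ψ (ψ g))⁻¹ * ψ h * ψ (ψ g) = ψ h * ψ g := by
        calc ψ g * (ψ (ψ g))⁻¹ * ψ h * ψ (ψ g)
            = ψ g * (ψ (ψ g))⁻¹ * (ψ h * ψ (ψ g)) := by rw [mul_assoc]
          _ = ψ g * (ψ (ψ g))⁻¹ * (ψ (ψ g) * ψ h) := by rw [hab h (ψ g)]
          _ = ψ g * ψ h := by group
          _ = ψ h * ψ g := hab g h
      rw [e1]
      group
    calc (g * ψ g⁻¹ * h * ψ g) * ψ (g * ψ g⁻¹ * h * ψ g)⁻¹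
        = (g * ψ g⁻¹ * h) * (ψ g * (ψ (g * ψ g⁻¹ * h * ψ g))⁻¹) := by
          rw [map_inv ψ (g * ψ g⁻¹ * h * ψ g), mul_assoc]
      _ = (g * ψ g⁻¹ * h) * (ψ h)⁻¹ := by rw [hkey]
      _ = (g * ψ g⁻¹) * (h * ψ h⁻¹) := by rw [map_inv ψ h]; group
end

section
/- Let ψ : G → G be a fixed point free abelian endomorphism of a finite group G. Then the map R_ψ : G × G → G × G given by R_ψ(g,h) = (ψ(g⁻¹)·h·ψ(g), ψ(h·g⁻¹)·h⁻¹·ψ(g)·g·ψ(g⁻¹)·h·ψ(g·h⁻¹)) satisfies the set-theoretic Yang–Baxter equation: (R×id)(id×R)(R×id) = (id×R)(R×id)(id×R) on G × G × G. -/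
def mapFirstTwo {B : Type*} (R : B × B → B × B) : B × B × B → B × B × B :=
  fun t => ((R (t.1, t.2.1)).1, (R (t.1, t.2.1)).2, t.2.2)

def mapLastTwo {B : Type*} (R : B × B → B × B) : B × B × B → B × B × B :=
  fun t => (t.1, R t.2)

def IsYangBaxterSolution {B : Type*} (R : B × B → B × B) : Prop :=
  mapFirstTwo R ∘ mapLastTwo R ∘ mapFirstTwo R
    = mapLastTwo R ∘ mapFirstTwo R ∘ mapLastTwo R

section aux
variable {G : Type*} [Group G] (ψ : G →* G)

def sigm (x y : G) : G := (ψ x)⁻¹ * y * ψ x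
def taum (x y : G) : G := ψ y * ((sigm ψ x y)⁻¹ * x * sigm ψ x y) * (ψ y)⁻¹

lemma sig_psi (hab : ∀ x y : G, ψ x * ψ y = ψ y * ψ x) (x y : G) :
    ψ (sigm ψ x y) = ψ y := by
  simp only [sigm, map_mul, map_inv]
  rw [mul_assoc, hab y (ψ x), inv_mul_cancel_left]

lemma tau_psi (hab : ∀ x y : G, ψ x * ψ y = ψ y * ψ x) (x y : G) :
    ψ (taum ψ x y) = ψ x := by
  simp only [taum, map_mul, map_inv, sig_psi ψ hab]
  have inner : (ψ y)⁻¹ * ψ x * ψ y = ψ x := by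
    rw [mul_assoc, hab x y, inv_mul_cancel_left]
  rw [inner]
  have c : Commute (ψ (ψ y)) (ψ x) := hab (ψ y) x
  rw [c.eq, mul_inv_cancel_right]

lemma yb1 (hab : ∀ x y : G, ψ x * ψ y = ψ y * ψ x) (g h k : G) :
    sigm ψ (sigm ψ g h) (sigm ψ (taum ψ g h) k) = sigm ψ g (sigm ψ h k) := by
  have e1 := sig_psi ψ hab g h
  have e2 := tau_psi ψ hab g h
  show (ψ (sigm ψ g h))⁻¹ * (sigm ψ (taum ψ g h) k) * ψ (sigm ψ g h) = _
  rw [e1, show sigm ψ (taum ψ g h) k = (ψ (taum ψ g h))⁻¹ * k * ψ (taum ψ g h) from rfl, e2]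
  show _ = (ψ g)⁻¹ * ((ψ h)⁻¹ * k * ψ h) * ψ g
  calc (ψ h)⁻¹ * ((ψ g)⁻¹ * k * ψ g) * ψ h = (ψ g * ψ h)⁻¹ * k * (ψ g * ψ h) := by group
    _ = (ψ h * ψ g)⁻¹ * k * (ψ h * ψ g) := by rw [hab]
    _ = (ψ g)⁻¹ * ((ψ h)⁻¹ * k * ψ h) * ψ g := by group

lemma yb2 (hab : ∀ x y : G, ψ x * ψ y = ψ y * ψ x) (g h k : G) :
    taum ψ (sigm ψ g h) (sigm ψ (taum ψ g h) k)
      = sigm ψ (taum ψ g (sigm ψ h k)) (taum ψ h k) := by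
  set S := sigm ψ h k with hS
  set T := taum ψ g h with hT
  set Y := sigm ψ T k with hY
  set U := taum ψ g S with hU
  set V := taum ψ h k with hV
  set X := sigm ψ g h with hX
  have eX : ψ X = ψ h := sig_psi ψ hab g h
  have eY : ψ Y = ψ k := sig_psi ψ hab T k
  have eU : ψ U = ψ g := tau_psi ψ hab g S
  have eT : ψ T = ψ g := tau_psi ψ hab g h
  simp only [taum, sigm] at *
  rw [eX, eY, eU]
  rw [eT] at hY
  rw [hX, hY, hV]
  have AB : Commute (ψ g) (ψ h) := hab g h
  have AC : Commute (ψ g) (ψ k) := hab g k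
  have conj1 : ψ g * ψ h * (ψ g)⁻¹ = ψ h := by rw [AB.eq, mul_inv_cancel_right]
  have conj2 : ψ g * (ψ h)⁻¹ * (ψ g)⁻¹ = (ψ h)⁻¹ := by
    rw [AB.inv_right.eq, mul_inv_cancel_right]
  have BAinv : (ψ h)⁻¹ * (ψ g)⁻¹ = (ψ g)⁻¹ * (ψ h)⁻¹ := (AB.inv_left.inv_right.eq).symm
  have CA : ψ k * (ψ g)⁻¹ = (ψ g)⁻¹ * ψ k := AC.symm.inv_right.eq
  have ACi : ψ g * (ψ k)⁻¹ = (ψ k)⁻¹ * ψ g := AC.inv_right.eq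
  calc ψ k * (((ψ h)⁻¹ * ((ψ g)⁻¹ * k * ψ g) * ψ h)⁻¹ * ((ψ g)⁻¹ * h * ψ g) *
        ((ψ h)⁻¹ * ((ψ g)⁻¹ * k * ψ g) * ψ h)) * (ψ k)⁻¹
      = ψ k * (ψ h)⁻¹ * (ψ g)⁻¹ * k⁻¹ * (ψ g * ψ h * (ψ g)⁻¹) * h *
        (ψ g * (ψ h)⁻¹ * (ψ g)⁻¹) * k * (ψ g * ψ h) * (ψ k)⁻¹ := by group
    _ = ψ k * (ψ h)⁻¹ * (ψ g)⁻¹ * k⁻¹ * ψ h * h * (ψ h)⁻¹ * k * (ψ g * ψ h) * (ψ k)⁻¹ := by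
        rw [conj1, conj2]
    _ = ψ k * ((ψ h)⁻¹ * (ψ g)⁻¹) * (k⁻¹ * ψ h * h * (ψ h)⁻¹ * k) * (ψ g * ψ h) * (ψ k)⁻¹ := by
        group
    _ = ψ k * ((ψ g)⁻¹ * (ψ h)⁻¹) * (k⁻¹ * ψ h * h * (ψ h)⁻¹ * k) * (ψ h * ψ g) * (ψ k)⁻¹ := by
        rw [BAinv, AB.eq]
    _ = (ψ k * (ψ g)⁻¹) * ((ψ h)⁻¹ * k⁻¹ * ψ h * h * (ψ h)⁻¹ * k * ψ h) * (ψ g * (ψ k)⁻¹) := by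
        group
    _ = ((ψ g)⁻¹ * ψ k) * ((ψ h)⁻¹ * k⁻¹ * ψ h * h * (ψ h)⁻¹ * k * ψ h) * ((ψ k)⁻¹ * ψ g) := by
        rw [CA, ACi]
    _ = (ψ g)⁻¹ * (ψ k * (((ψ h)⁻¹ * k * ψ h)⁻¹ * h * ((ψ h)⁻¹ * k * ψ h)) * (ψ k)⁻¹) * ψ g := by
        group

lemma yb3 (hab : ∀ x y : G, ψ x * ψ y = ψ y * ψ x) (g h k : G) :
    taum ψ (taum ψ g h) k = taum ψ (taum ψ g (sigm ψ h k)) (taum ψ h k) := by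
  set S := sigm ψ h k with hS
  set T := taum ψ g h with hT
  set U := taum ψ g S with hU
  set V := taum ψ h k with hV
  have eT : ψ T = ψ g := tau_psi ψ hab g h
  have eU : ψ U = ψ g := tau_psi ψ hab g S
  have eV : ψ V = ψ h := tau_psi ψ hab h k
  have eS : ψ S = ψ k := sig_psi ψ hab h k
  simp only [taum, sigm] at *
  rw [eT, eU, eV]
  rw [eS, hS] at hU
  rw [hT, hU, hV]
  have AB : Commute (ψ g) (ψ h) := hab g h
  have AC : Commute (ψ g) (ψ k) := hab g k
  have BC : Commute (ψ h) (ψ k) := hab h k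
  have conj2 : ψ g * (ψ h)⁻¹ * (ψ g)⁻¹ = (ψ h)⁻¹ := by
    rw [AB.inv_right.eq, mul_inv_cancel_right]
  have conjAC : ψ g * (ψ k)⁻¹ * (ψ g)⁻¹ = (ψ k)⁻¹ := by
    rw [AC.inv_right.eq, mul_inv_cancel_right]
  have CiA : (ψ k)⁻¹ * ψ g = ψ g * (ψ k)⁻¹ := AC.symm.inv_left.eq
  have CiB : (ψ k)⁻¹ * (ψ h)⁻¹ = (ψ h)⁻¹ * (ψ k)⁻¹ := BC.inv_left.inv_right.eq.symm
  have conjBA : ψ h * ψ g * (ψ h)⁻¹ = ψ g := by rw [← AB.eq, mul_inv_cancel_right]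
  have hW1 : ((ψ g)⁻¹ * h * ψ g) * (ψ h)⁻¹ * ((ψ g)⁻¹ * k * ψ g) * (ψ k)⁻¹
      = (ψ g)⁻¹ * h * (ψ h)⁻¹ * k * ψ g * (ψ k)⁻¹ := by
    calc ((ψ g)⁻¹ * h * ψ g) * (ψ h)⁻¹ * ((ψ g)⁻¹ * k * ψ g) * (ψ k)⁻¹
        = (ψ g)⁻¹ * h * (ψ g * (ψ h)⁻¹ * (ψ g)⁻¹) * k * ψ g * (ψ k)⁻¹ := by group
      _ = (ψ g)⁻¹ * h * (ψ h)⁻¹ * k * ψ g * (ψ k)⁻¹ := by rw [conj2]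
  have hW2 : ((ψ g)⁻¹ * ((ψ h)⁻¹ * k * ψ h) * ψ g) * (ψ k)⁻¹ *
        ((ψ g)⁻¹ * (ψ k * (((ψ h)⁻¹ * k * ψ h)⁻¹ * h * ((ψ h)⁻¹ * k * ψ h)) * (ψ k)⁻¹) * ψ g) *
        (ψ h)⁻¹
      = (ψ g)⁻¹ * h * (ψ h)⁻¹ * k * ψ g * (ψ k)⁻¹ := by
    calc ((ψ g)⁻¹ * ((ψ h)⁻¹ * k * ψ h) * ψ g) * (ψ k)⁻¹ *
        ((ψ g)⁻¹ * (ψ k * (((ψ h)⁻¹ * k * ψ h)⁻¹ * h * ((ψ h)⁻¹ * k * ψ h)) * (ψ k)⁻¹) * ψ g) *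
        (ψ h)⁻¹
        = (ψ g)⁻¹ * (ψ h)⁻¹ * k * ψ h * (ψ g * (ψ k)⁻¹ * (ψ g)⁻¹) * ψ k * (ψ h)⁻¹ * k⁻¹ *
          ψ h * h * (ψ h)⁻¹ * k * ψ h * (ψ k)⁻¹ * ψ g * (ψ h)⁻¹ := by group
      _ = (ψ g)⁻¹ * (ψ h)⁻¹ * k * ψ h * (ψ k)⁻¹ * ψ k * (ψ h)⁻¹ * k⁻¹ *
          ψ h * h * (ψ h)⁻¹ * k * ψ h * (ψ k)⁻¹ * ψ g * (ψ h)⁻¹ := by rw [conjAC]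
      _ = (ψ g)⁻¹ * h * (ψ h)⁻¹ * k * ψ h * ((ψ k)⁻¹ * ψ g) * (ψ h)⁻¹ := by group
      _ = (ψ g)⁻¹ * h * (ψ h)⁻¹ * k * ψ h * (ψ g * (ψ k)⁻¹) * (ψ h)⁻¹ := by rw [CiA]
      _ = (ψ g)⁻¹ * h * (ψ h)⁻¹ * k * ψ h * ψ g * ((ψ k)⁻¹ * (ψ h)⁻¹) := by group
      _ = (ψ g)⁻¹ * h * (ψ h)⁻¹ * k * ψ h * ψ g * ((ψ h)⁻¹ * (ψ k)⁻¹) := by rw [CiB]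
      _ = (ψ g)⁻¹ * h * (ψ h)⁻¹ * k * (ψ h * ψ g * (ψ h)⁻¹) * (ψ k)⁻¹ := by group
      _ = (ψ g)⁻¹ * h * (ψ h)⁻¹ * k * ψ g * (ψ k)⁻¹ := by rw [conjBA]
  calc ψ k * (((ψ g)⁻¹ * k * ψ g)⁻¹ *
          (ψ h * (((ψ g)⁻¹ * h * ψ g)⁻¹ * g * ((ψ g)⁻¹ * h * ψ g)) * (ψ h)⁻¹) *
          ((ψ g)⁻¹ * k * ψ g)) * (ψ k)⁻¹
      = (((ψ g)⁻¹ * h * ψ g) * (ψ h)⁻¹ * ((ψ g)⁻¹ * k * ψ g) * (ψ k)⁻¹)⁻¹ * g *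
        (((ψ g)⁻¹ * h * ψ g) * (ψ h)⁻¹ * ((ψ g)⁻¹ * k * ψ g) * (ψ k)⁻¹) := by group
    _ = ((ψ g)⁻¹ * h * (ψ h)⁻¹ * k * ψ g * (ψ k)⁻¹)⁻¹ * g *
        ((ψ g)⁻¹ * h * (ψ h)⁻¹ * k * ψ g * (ψ k)⁻¹) := by rw [hW1]
    _ = (((ψ g)⁻¹ * ((ψ h)⁻¹ * k * ψ h) * ψ g) * (ψ k)⁻¹ *
        ((ψ g)⁻¹ * (ψ k * (((ψ h)⁻¹ * k * ψ h)⁻¹ * h * ((ψ h)⁻¹ * k * ψ h)) * (ψ k)⁻¹) * ψ g) *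
        (ψ h)⁻¹)⁻¹ * g *
        (((ψ g)⁻¹ * ((ψ h)⁻¹ * k * ψ h) * ψ g) * (ψ k)⁻¹ *
        ((ψ g)⁻¹ * (ψ k * (((ψ h)⁻¹ * k * ψ h)⁻¹ * h * ((ψ h)⁻¹ * k * ψ h)) * (ψ k)⁻¹) * ψ g) *
        (ψ h)⁻¹) := by rw [hW2]
    _ = ψ h * (((ψ g)⁻¹ * (ψ k * (((ψ h)⁻¹ * k * ψ h)⁻¹ * h * ((ψ h)⁻¹ * k * ψ h)) * (ψ k)⁻¹) *
          ψ g)⁻¹ *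
          (ψ k * (((ψ g)⁻¹ * ((ψ h)⁻¹ * k * ψ h) * ψ g)⁻¹ * g *
            ((ψ g)⁻¹ * ((ψ h)⁻¹ * k * ψ h) * ψ g)) * (ψ k)⁻¹) *
          ((ψ g)⁻¹ * (ψ k * (((ψ h)⁻¹ * k * ψ h)⁻¹ * h * ((ψ h)⁻¹ * k * ψ h)) * (ψ k)⁻¹) * ψ g)) *
        (ψ h)⁻¹ := by group

end aux

theorem Rpsi_is_YB_solution {G : Type*} [Group G] [Fintype G] (ψ : G →* G)
    (hfpf : ∀ g : G, ψ g = g → g = 1)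
    (hab : ∀ x y : G, ψ x * ψ y = ψ y * ψ x) :
    IsYangBaxterSolution (fun p : G × G =>
      (ψ p.1⁻¹ * p.2 * ψ p.1,
        ψ (p.2 * p.1⁻¹) * p.2⁻¹ * ψ p.1 * p.1 * ψ p.1⁻¹ * p.2 * ψ (p.1 * p.2⁻¹))) := by
  unfold IsYangBaxterSolution
  have hR : (fun p : G × G =>
      (ψ p.1⁻¹ * p.2 * ψ p.1,
        ψ (p.2 * p.1⁻¹) * p.2⁻¹ * ψ p.1 * p.1 * ψ p.1⁻¹ * p.2 * ψ (p.1 * p.2⁻¹)))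
      = fun p : G × G => (sigm ψ p.1 p.2, taum ψ p.1 p.2) := by
    funext p
    simp only [sigm, taum, map_mul, map_inv, Prod.mk.injEq]
    constructor <;> group
  rw [hR]
  funext t
  obtain ⟨g, h, k⟩ := t
  simp only [mapFirstTwo, mapLastTwo, Function.comp_apply]
  simp only [Prod.mk.injEq]
  exact ⟨yb1 ψ hab g h k, yb2 ψ hab g h k, yb3 ψ hab g h k⟩
end

section
/- Let ψ : G → G be a fixed point free abelian endomorphism of a finite group G. Then the map R'_ψ : G × G → G × G given by R'_ψ(g,h) = (g·ψ(g⁻¹)·h·ψ(g)·g⁻¹, ψ(h)·g·ψ(h⁻¹)) satisfies the set-theoretic Yang–Baxter equation. -/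
theorem Rpsi'_is_YB_solution {G : Type*} [Group G] [Fintype G] (ψ : G →* G)
    (hfpf : ∀ g : G, ψ g = g → g = 1)
    (hab : ∀ x y : G, ψ x * ψ y = ψ y * ψ x) :
    IsYangBaxterSolution (fun p : G × G =>
      (p.1 * ψ p.1⁻¹ * p.2 * ψ p.1 * p.1⁻¹, ψ p.2 * p.1 * ψ p.2⁻¹)) := by
  have hc : ∀ x y : G, Commute (ψ x) (ψ y) := fun x y => hab x y
  -- ψ kills conjugation by elements of the (abelian) image of ψ
  have hu : ∀ g h k : G, ψ (g * (ψ k)⁻¹ * h * ψ k * g⁻¹) = ψ h := by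
    intro g h k
    simp only [map_mul, map_inv]
    have c1 : Commute (ψ h) (ψ g * (ψ (ψ k))⁻¹) :=
      (hc h g).mul_right (hc h (ψ k)).inv_right
    calc ψ g * (ψ (ψ k))⁻¹ * ψ h * ψ (ψ k) * (ψ g)⁻¹
        = (ψ g * (ψ (ψ k))⁻¹) * ψ h * (ψ g * (ψ (ψ k))⁻¹)⁻¹ := by group
      _ = ψ h := by rw [← c1.eq]; group
  have hv : ∀ g h : G, ψ (ψ h * g * (ψ h)⁻¹) = ψ g := by
    intro g h
    simp only [map_mul, map_inv]
    rw [hab (ψ h) g]; group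
  funext t
  obtain ⟨a, b, c⟩ := t
  simp only [IsYangBaxterSolution, mapFirstTwo, mapLastTwo, Function.comp_apply, map_inv, hu, hv,
    Prod.mk.injEq]
  refine ⟨?_, ?_, ?_⟩
  · -- first coordinate
    have e1 : ψ a * (ψ b)⁻¹ * (ψ a)⁻¹ = (ψ b)⁻¹ := by
      rw [(hc a b).inv_right.eq]; group
    trans ((a * (ψ a)⁻¹ * b * (ψ a * (ψ b)⁻¹ * (ψ a)⁻¹)) * c *
      (a * (ψ a)⁻¹ * b * (ψ a * (ψ b)⁻¹ * (ψ a)⁻¹))⁻¹)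
    · group
    · rw [e1]; group
  · -- second coordinate
    have e2 : (ψ c)⁻¹ * (ψ a)⁻¹ * ψ c = (ψ a)⁻¹ := by
      rw [mul_assoc, (hc a c).inv_left.eq]; group
    have e3 : (ψ c)⁻¹ * ψ a * ψ c = ψ a := by
      rw [mul_assoc, (hc a c).eq]; group
    trans (ψ c * a * ((ψ c)⁻¹ * (ψ a)⁻¹ * ψ c) * b * ((ψ c)⁻¹ * ψ a * ψ c) * a⁻¹ * (ψ c)⁻¹)
    · rw [e2, e3]; group
    · group
  · -- third coordinate
    trans ((ψ c * ψ b) * a * (ψ c * ψ b)⁻¹)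
    · group
    · rw [hab c b]; group
end

section
/- Let ψ : G → G be a fixed point free abelian endomorphism of a finite group G. Define R_ψ(g,h) = (ψ(g⁻¹)·h·ψ(g), ψ(h·g⁻¹)·h⁻¹·ψ(g)·g·ψ(g⁻¹)·h·ψ(g·h⁻¹)) and R'_ψ(g,h) = (g·ψ(g⁻¹)·h·ψ(g)·g⁻¹, ψ(h)·g·ψ(h⁻¹)). Then R_ψ and R'_ψ are mutually inverse bijections of G × G. -/
theorem Rpsi_Rpsi'_mutually_inverse {G : Type*} [Group G] [Fintype G] (ψ : G →* G)
    (hfpf : ∀ g : G, ψ g = g → g = 1)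
    (hab : ∀ x y : G, ψ x * ψ y = ψ y * ψ x) :
    Function.LeftInverse
      (fun p : G × G => (p.1 * ψ p.1⁻¹ * p.2 * ψ p.1 * p.1⁻¹, ψ p.2 * p.1 * ψ p.2⁻¹))
      (fun p : G × G =>
        (ψ p.1⁻¹ * p.2 * ψ p.1,
          ψ (p.2 * p.1⁻¹) * p.2⁻¹ * ψ p.1 * p.1 * ψ p.1⁻¹ * p.2 * ψ (p.1 * p.2⁻¹))) ∧
    Function.RightInverse
      (fun p : G × G => (p.1 * ψ p.1⁻¹ * p.2 * ψ p.1 * p.1⁻¹, ψ p.2 * p.1 * ψ p.2⁻¹))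
      (fun p : G × G =>
        (ψ p.1⁻¹ * p.2 * ψ p.1,
          ψ (p.2 * p.1⁻¹) * p.2⁻¹ * ψ p.1 * p.1 * ψ p.1⁻¹ * p.2 * ψ (p.1 * p.2⁻¹))) := by
  letI : CommGroup ↥ψ.range :=
    { (inferInstance : Group ↥ψ.range) with
      mul_comm := by
        rintro ⟨a, u, rfl⟩ ⟨b, v, rfl⟩
        exact Subtype.ext (hab u v) }
  have key : ∀ w v : G, ψ.rangeRestrict w = ψ.rangeRestrict v → ψ w = ψ v :=
    fun w v h => congrArg Subtype.val h
  constructor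
  · rintro ⟨x, y⟩
    have h1 : ψ (ψ x⁻¹ * y * ψ x) = ψ y := by
      apply key
      apply Additive.ofMul.injective
      simp only [map_mul, map_inv, ofMul_mul, ofMul_inv]
      abel
    have h2 : ψ (ψ (y * x⁻¹) * y⁻¹ * ψ x * x * ψ x⁻¹ * y * ψ (x * y⁻¹)) = ψ x := by
      apply key
      apply Additive.ofMul.injective
      simp only [map_mul, map_inv, ofMul_mul, ofMul_inv]
      abel
    have h1' : ψ (ψ x⁻¹ * y * ψ x)⁻¹ = (ψ y)⁻¹ := by rw [map_inv, h1]
    have h2' : ψ (ψ (y * x⁻¹) * y⁻¹ * ψ x * x * ψ x⁻¹ * y * ψ (x * y⁻¹))⁻¹ = (ψ x)⁻¹ := by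
      rw [map_inv, h2]
    simp only [h1, h1', h2, h2']
    simp only [map_mul, map_inv, Prod.mk.injEq]
    constructor <;> group
  · rintro ⟨x, y⟩
    have h1 : ψ (x * ψ x⁻¹ * y * ψ x * x⁻¹) = ψ y := by
      apply key
      apply Additive.ofMul.injective
      simp only [map_mul, map_inv, ofMul_mul, ofMul_inv]
      abel
    have h2 : ψ (ψ y * x * ψ y⁻¹) = ψ x := by
      apply key
      apply Additive.ofMul.injective
      simp only [map_mul, map_inv, ofMul_mul, ofMul_inv]
      abel
    have h1' : ψ (x * ψ x⁻¹ * y * ψ x * x⁻¹)⁻¹ = (ψ y)⁻¹ := by rw [map_inv, h1]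
    have h2' : ψ (ψ y * x * ψ y⁻¹)⁻¹ = (ψ x)⁻¹ := by rw [map_inv, h2]
    have h3 : ψ (ψ y * x * ψ y⁻¹ * (x * ψ x⁻¹ * y * ψ x * x⁻¹)⁻¹) = ψ x * (ψ y)⁻¹ := by
      rw [map_mul, h2, h1']
    have h4 : ψ (x * ψ x⁻¹ * y * ψ x * x⁻¹ * (ψ y * x * ψ y⁻¹)⁻¹) = ψ y * (ψ x)⁻¹ := by
      rw [map_mul, h1, h2']
    simp only [h1, h1', h2, h2', h3, h4]
    simp only [map_mul, map_inv, Prod.mk.injEq]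
    constructor <;> group
end

section
/- Let G be a finite group and ψ : G → G a fixed point free abelian endomorphism. Then the set N = {η_g : g ∈ G}, where η_g : G → G is defined by η_g(h) = g·h·ψ(g⁻¹), is a subgroup of the symmetric group Perm(G) that acts regularly (freely and transitively) on G, and η_g·η_h = η_{gh}. -/
theorem eta_regular_subgroup {G : Type*} [Group G] [Fintype G] (ψ : G →* G)
    (hfpf : ∀ g : G, ψ g = g → g = 1)
    (hab : ∀ x y : G, ψ x * ψ y = ψ y * ψ x) :
    ∃ N : Subgroup (Equiv.Perm G),
      (∀ f : Equiv.Perm G, f ∈ N ↔ ∃ g : G, ∀ h : G, f h = g * h * ψ g⁻¹) ∧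
      (∀ f ∈ N, ∀ h : G, f h = h → f = 1) ∧
      (∀ a b : G, ∃ f ∈ N, f a = b) ∧
      (∀ g₁ g₂ h : G,
        g₁ * (g₂ * h * ψ g₂⁻¹) * ψ g₁⁻¹ = (g₁ * g₂) * h * ψ (g₁ * g₂)⁻¹) := by
  -- key lemma: if ψ x is a conjugate of x then x = 1
  have key : ∀ x b : G, ψ x = b⁻¹ * x * b → x = 1 := by
    intro x b h
    have h' := congrArg ψ h
    rw [map_mul, map_mul, hab b⁻¹ x, mul_assoc, ← map_mul, inv_mul_cancel,
      map_one, mul_one] at h'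
    have hx1 : ψ x = 1 := hfpf _ h'
    rw [hx1] at h
    have : b * 1 * b⁻¹ = b * (b⁻¹ * x * b) * b⁻¹ := by rw [← h]
    simpa [mul_assoc] using this.symm
  -- the homomorphism g ↦ η g
  let η : G →* Equiv.Perm G :=
  { toFun := fun g => (Equiv.mulLeft g).trans (Equiv.mulRight (ψ g⁻¹))
    map_one' := by ext h; simp
    map_mul' := by
      intro g₁ g₂
      ext h
      simp [Equiv.Perm.mul_apply, mul_inv_rev, map_mul, mul_assoc] }
  have ηapp : ∀ g h : G, η g h = g * h * ψ g⁻¹ := fun g h => rfl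
  refine ⟨η.range, ?_, ?_, ?_, ?_⟩
  · intro f
    constructor
    · rintro ⟨g, rfl⟩
      exact ⟨g, fun h => rfl⟩
    · rintro ⟨g, hg⟩
      exact ⟨g, Equiv.ext fun h => (hg h).symm⟩
  · rintro f ⟨g, rfl⟩ h hfix
    have hfix' : g * h * ψ g⁻¹ = h := hfix
    have e1 : ψ g⁻¹ = (g * h)⁻¹ * h := by
      rw [eq_inv_mul_iff_mul_eq]; exact hfix'
    have hg : ψ g = h⁻¹ * g * h := by
      calc ψ g = (ψ g⁻¹)⁻¹ := by rw [map_inv, inv_inv]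
        _ = ((g * h)⁻¹ * h)⁻¹ := by rw [e1]
        _ = h⁻¹ * g * h := by group
    have : g = 1 := key g h hg
    subst this
    ext x
    simp [ηapp]
  · intro a b
    have hinj : Function.Injective (fun g : G => g⁻¹ * b * ψ g) := by
      intro g h hgh
      simp only at hgh
      have e : b * ψ h = h * (g⁻¹ * b * ψ g) := by
        rw [hgh]; group
      have e2 : ψ h = b⁻¹ * (h * (g⁻¹ * b * ψ g)) := by rw [← e]; group
      have hc : ψ (h * g⁻¹) = b⁻¹ * (h * g⁻¹) * b := by
        rw [map_mul, map_inv, e2]; group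
      have h1 : h * g⁻¹ = 1 := key _ b hc
      have : h = g := by
        have := mul_inv_eq_one.mp h1
        exact this
      exact this.symm
    have hsurj : Function.Surjective (fun g : G => g⁻¹ * b * ψ g) :=
      Finite.surjective_of_injective hinj
    obtain ⟨g, hg⟩ := hsurj a
    refine ⟨η g, ⟨g, rfl⟩, ?_⟩
    simp only at hg
    rw [ηapp, ← hg, map_inv]
    group
  · intro g₁ g₂ h
    simp [mul_inv_rev, map_mul, mul_assoc]
end

section
/- Let ψ be a fixed point free abelian endomorphism of a finite group G, and let η_g ∈ Perm(G) be defined by η_g(h) = g·h·ψ(g⁻¹). Then λ(k)·η_g·λ(k⁻¹) = η_{kgk⁻¹} for all g, k ∈ G, where λ is the left regular representation; hence N = {η_g : g ∈ G} is stable under conjugation by λ(G). -/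
theorem eta_G_stable {G : Type*} [Group G] [Fintype G] (ψ : G →* G)
    (hfpf : ∀ g : G, ψ g = g → g = 1)
    (hab : ∀ x y : G, ψ x * ψ y = ψ y * ψ x) :
    (∀ g k h : G,
      k * (g * (k⁻¹ * h) * ψ g⁻¹) = (k * g * k⁻¹) * h * ψ (k * g * k⁻¹)⁻¹) ∧
    ∃ N : Subgroup (Equiv.Perm G),
      (∀ f : Equiv.Perm G, f ∈ N ↔ ∃ g : G, ∀ h : G, f h = g * h * ψ g⁻¹) ∧
      (∀ f ∈ N, ∀ k : G,
        (Equiv.mulLeft k) * f * (Equiv.mulLeft k)⁻¹ ∈ N) := by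
  have hconj : ∀ g k : G, ψ (k * g * k⁻¹) = ψ g := by
    intro g k
    have : ψ k * ψ g * (ψ k)⁻¹ = ψ g := by
      rw [hab k g]; group
    simpa [map_mul, map_inv] using this
  have part1 : ∀ g k h : G,
      k * (g * (k⁻¹ * h) * ψ g⁻¹) = (k * g * k⁻¹) * h * ψ (k * g * k⁻¹)⁻¹ := by
    intro g k h
    have h1 : ψ ((k * g * k⁻¹)⁻¹) = ψ (g⁻¹) := by
      rw [map_inv, map_inv, hconj]
    rw [h1]
    group
  refine ⟨part1, ?_⟩
  let η : G →* Equiv.Perm G :=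
    { toFun := fun g => Equiv.mulLeft g * Equiv.mulRight (ψ g)⁻¹
      map_one' := by ext h; simp
      map_mul' := by
        intro a b
        ext h
        simp [mul_assoc]
      }
  have hη : ∀ g h : G, η g h = g * h * ψ g⁻¹ := by
    intro g h
    simp [η, map_inv, mul_assoc]
  refine ⟨η.range, ?_, ?_⟩
  · intro f
    constructor
    · rintro ⟨g, rfl⟩
      exact ⟨g, fun h => hη g h⟩
    · rintro ⟨g, hg⟩
      refine ⟨g, ?_⟩
      ext h
      rw [hη, hg]
  · rintro f ⟨g, rfl⟩ k
    refine ⟨k * g * k⁻¹, ?_⟩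
    ext h
    simp only [Equiv.Perm.mul_apply, hη]
    have := part1 g k h
    simpa [mul_assoc] using (part1 g k h).symm
end

section
/- Let n be odd and G = D_n the dihedral group of order 2n. Then the only fixed point free abelian endomorphism of D_n is the trivial map. -/
/-!
Conjugating `r i` by the reflection `sr 0` gives `r (-i)`, so a homomorphism with commuting image
sends `r (2 * i) = r i * r i` to `ψ (r i) * ψ (r (-i)) = 1`. For odd `n`, `2` is invertible mod `n`,
so all rotations are killed and `ψ` is constant, equal to `y = ψ (sr 0)`, on the reflections.
Then `y * y = 1`; for odd `n` this forces `y = 1` or `y` a reflection, and a reflection `y` would be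
a fixed point of `ψ`.
-/

theorem ZMod.isUnit_two_of_odd {n : ℕ} (hn : Odd n) : IsUnit (2 : ZMod n) := by
  exact_mod_cast (ZMod.isUnit_iff_coprime 2 n).mpr (Nat.coprime_two_left.mpr hn)

namespace DihedralGroup

variable {n : ℕ}

section CommutingImage

variable {H : Type*} [Group H] (f : DihedralGroup n →* H)
  (hf : ∀ x y : DihedralGroup n, f x * f y = f y * f x)
include hf

theorem map_r_neg_of_commute (i : ZMod n) : f (r (-i)) = f (r i) := by
  have hconj : sr 0 * r i * sr 0 = (r (-i) : DihedralGroup n) := by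
    simp only [sr_mul_r, sr_mul_sr, zero_add, zero_sub]
  rw [← hconj, map_mul, map_mul, hf (sr 0) (r i), mul_assoc, ← map_mul, sr_mul_self, map_one,
    mul_one]

theorem map_r_two_mul_of_commute (i : ZMod n) : f (r (2 * i)) = 1 :=
  calc f (r (2 * i)) = f (r i) * f (r (-i)) := by
        rw [map_r_neg_of_commute f hf, ← map_mul, r_mul_r, two_mul]
    _ = 1 := by rw [← map_mul, r_mul_r, add_neg_cancel, r_zero, map_one]

theorem map_r_of_commute_of_odd (hn : Odd n) (i : ZMod n) : f (r i) = 1 := by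
  obtain ⟨u, hu⟩ := ZMod.isUnit_two_of_odd hn
  simpa [← hu] using map_r_two_mul_of_commute f hf (↑u⁻¹ * i)

end CommutingImage

theorem map_sr_of_map_r {H : Type*} [Group H] (f : DihedralGroup n →* H)
    (hr : ∀ i, f (r i) = 1) (i : ZMod n) : f (sr i) = f (sr 0) := by
  rw [← zero_add i, ← sr_mul_r, map_mul, hr, mul_one]

theorem eq_one_or_exists_eq_sr_of_mul_self_of_odd (hn : Odd n) {g : DihedralGroup n}
    (hg : g * g = 1) : g = 1 ∨ ∃ i, g = sr i := by
  rcases g with a | a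
  · left
    rw [r_mul_r, one_def, r.injEq, ← two_mul] at hg
    rw [(ZMod.isUnit_two_of_odd hn).mul_right_eq_zero.mp hg, r_zero]
  · exact Or.inr ⟨a, rfl⟩

end DihedralGroup

open DihedralGroup in
theorem dihedral_odd_fpf_trivial (n : ℕ) (hn : Odd n)
    (ψ : DihedralGroup n →* DihedralGroup n)
    (hfpf : ∀ g : DihedralGroup n, ψ g = g → g = 1)
    (hab : ∀ x y : DihedralGroup n, ψ x * ψ y = ψ y * ψ x) :
    ∀ g : DihedralGroup n, ψ g = 1 := by
  have hr := map_r_of_commute_of_odd ψ hab hn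
  have hsr := map_sr_of_map_r ψ hr
  have hsq : ψ (sr 0) * ψ (sr 0) = 1 := by rw [← map_mul, sr_mul_self, map_one]
  have hsr0 : ψ (sr 0) = 1 := by
    rcases eq_one_or_exists_eq_sr_of_mul_self_of_odd hn hsq with h | ⟨a, ha⟩
    · exact h
    · have hfixed : ψ (sr a) = sr a := by rw [hsr, ha]
      exact absurd (hfpf (sr a) hfixed) (by rw [one_def]; exact fun h => nomatch h)
  rintro (i | i)
  · exact hr i
  · rw [hsr, hsr0]
end

section
/- Let n ≥ 5 and ψ : S_n → S_n be a nontrivial fixed point free abelian endomorphism. Then ker ψ = A_n, ψ is constant on odd permutations, and there exists τ ∈ A_n with τ² = 1 such that ψ(σ) = 1 for σ ∈ A_n and ψ(σ) = τ for σ ∉ A_n. -/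
theorem symm_fpf_structure (n : ℕ) (hn : 5 ≤ n)
    (ψ : Equiv.Perm (Fin n) →* Equiv.Perm (Fin n))
    (hnontriv : ∃ σ : Equiv.Perm (Fin n), ψ σ ≠ 1)
    (hfpf : ∀ σ : Equiv.Perm (Fin n), ψ σ = σ → σ = 1)
    (hab : ∀ σ π : Equiv.Perm (Fin n), ψ σ * ψ π = ψ π * ψ σ) :
    ψ.ker = alternatingGroup (Fin n) ∧
    (∀ σ π : Equiv.Perm (Fin n), σ ∉ alternatingGroup (Fin n) →
      π ∉ alternatingGroup (Fin n) → ψ σ = ψ π) ∧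
    ∃ τ : Equiv.Perm (Fin n), τ ∈ alternatingGroup (Fin n) ∧ τ ^ 2 = 1 ∧
      (∀ σ : Equiv.Perm (Fin n), σ ∈ alternatingGroup (Fin n) → ψ σ = 1) ∧
      (∀ σ : Equiv.Perm (Fin n), σ ∉ alternatingGroup (Fin n) → ψ σ = τ) := by
  have hsign : ∀ σ : Equiv.Perm (Fin n), σ ∉ alternatingGroup (Fin n) →
      Equiv.Perm.sign σ = -1 := by
    intro σ hσ
    rcases Int.units_eq_one_or (Equiv.Perm.sign σ) with h | h
    · exact absurd (Equiv.Perm.mem_alternatingGroup.mpr h) hσ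
    · exact h
  -- every 3-cycle is in the kernel
  have h3 : ∀ σ : Equiv.Perm (Fin n), σ.IsThreeCycle → ψ σ = 1 := by
    intro σ hσ
    have hconj : IsConj σ σ⁻¹ := by
      rw [Equiv.Perm.isConj_iff_cycleType_eq, Equiv.Perm.cycleType_inv]
    obtain ⟨g, hg⟩ := isConj_iff.mp hconj
    have h1 : ψ σ⁻¹ = ψ σ := by
      rw [← hg]
      simp only [map_mul, map_inv]
      exact mul_inv_eq_iff_eq_mul.mpr (hab g σ)
    have h2 : (ψ σ) ^ 2 = 1 := by
      have hinv : (ψ σ)⁻¹ = ψ σ := by rw [← map_inv, h1]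
      rw [pow_two]; nth_rewrite 1 [← hinv]; exact inv_mul_cancel _
    have h3' : (ψ σ) ^ 3 = 1 := by
      rw [← map_pow, ← Equiv.Perm.IsThreeCycle.orderOf hσ, pow_orderOf_eq_one, map_one]
    calc ψ σ = (ψ σ) ^ 3 * ((ψ σ) ^ 2)⁻¹ := by group
    _ = 1 := by rw [h2, h3']; simp
  -- alternating group ≤ kernel
  have hA : alternatingGroup (Fin n) ≤ ψ.ker := by
    rw [← Equiv.Perm.closure_three_cycles_eq_alternating, Subgroup.closure_le]
    intro σ hσ
    exact h3 σ hσ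
  -- ψ is constant on odd permutations
  have hconst : ∀ σ π : Equiv.Perm (Fin n), σ ∉ alternatingGroup (Fin n) →
      π ∉ alternatingGroup (Fin n) → ψ σ = ψ π := by
    intro σ π hσ hπ
    have hmem : σ * π⁻¹ ∈ alternatingGroup (Fin n) := by
      rw [Equiv.Perm.mem_alternatingGroup, map_mul, map_inv, hsign σ hσ, hsign π hπ]
      decide
    have := hA hmem
    rw [MonoidHom.mem_ker, map_mul, map_inv] at this
    calc ψ σ = (ψ σ * (ψ π)⁻¹) * ψ π := by group
    _ = ψ π := by rw [this, one_mul]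
  -- kernel = alternating group
  have hK : ψ.ker = alternatingGroup (Fin n) := by
    refine le_antisymm ?_ hA
    intro x hx
    by_contra hxA
    obtain ⟨σ, hσ⟩ := hnontriv
    apply hσ
    by_cases hsA : σ ∈ alternatingGroup (Fin n)
    · exact hA hsA
    · rw [hconst σ x hsA hxA]
      exact hx
  -- the element τ
  have h01 : (⟨0, by omega⟩ : Fin n) ≠ ⟨1, by omega⟩ := by
    simp [Fin.ext_iff]
  set s : Equiv.Perm (Fin n) := Equiv.swap ⟨0, by omega⟩ ⟨1, by omega⟩ with hs
  have hsodd : s ∉ alternatingGroup (Fin n) := by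
    rw [Equiv.Perm.mem_alternatingGroup, hs, Equiv.Perm.sign_swap h01]
    decide
  refine ⟨hK, hconst, ψ s, ?_, ?_, ?_, ?_⟩
  · -- ψ s ∈ alternatingGroup
    by_contra hodd
    have : ψ (ψ s) = ψ s := hconst (ψ s) s hodd hsodd
    have h1 : ψ s = 1 := hfpf (ψ s) this
    rw [h1] at hodd
    exact hodd (Subgroup.one_mem _)
  · rw [← map_pow]
    have : s ^ 2 = 1 := by
      rw [pow_two, hs, Equiv.swap_mul_self]
    rw [this, map_one]
  · intro σ hσ
    exact hA hσ
  · intro σ hσ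
    exact hconst σ s hσ hsodd
end

section
/- Let n ≥ 5 and τ ∈ A_n with τ² = 1. Then the map ψ_τ : S_n → S_n defined by ψ_τ(σ) = 1 if σ is even and ψ_τ(σ) = τ if σ is odd is a fixed point free abelian endomorphism of S_n, and τ ↦ ψ_τ is a bijection between involutions (together with the identity) in A_n and fixed point free abelian endomorphisms of S_n. -/
theorem symm_fpf_bijection (n : ℕ) (hn : 5 ≤ n) :
    (∀ τ : Equiv.Perm (Fin n), τ ∈ alternatingGroup (Fin n) → τ ^ 2 = 1 →
      ∃ ψ : Equiv.Perm (Fin n) →* Equiv.Perm (Fin n),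
        (∀ σ : Equiv.Perm (Fin n),
          ψ σ = if Equiv.Perm.sign σ = 1 then 1 else τ) ∧
        (∀ σ : Equiv.Perm (Fin n), ψ σ = σ → σ = 1) ∧
        (∀ σ π : Equiv.Perm (Fin n), ψ σ * ψ π = ψ π * ψ σ)) ∧
    (∀ ψ : Equiv.Perm (Fin n) →* Equiv.Perm (Fin n),
      (∀ σ : Equiv.Perm (Fin n), ψ σ = σ → σ = 1) →
      (∀ σ π : Equiv.Perm (Fin n), ψ σ * ψ π = ψ π * ψ σ) →
      ∃! τ : Equiv.Perm (Fin n), τ ∈ alternatingGroup (Fin n) ∧ τ ^ 2 = 1 ∧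
        ∀ σ : Equiv.Perm (Fin n),
          ψ σ = if Equiv.Perm.sign σ = 1 then 1 else τ) := by
  have hne : ((⟨0, by omega⟩ : Fin n) : Fin n) ≠ ⟨1, by omega⟩ := by
    simp [Fin.ext_iff]
  set a : Fin n := ⟨0, by omega⟩
  set b : Fin n := ⟨1, by omega⟩
  constructor
  · intro τ hτ hτ2
    have hsτ : Equiv.Perm.sign τ = 1 := Equiv.Perm.mem_alternatingGroup.mp hτ
    refine ⟨MonoidHom.mk' (fun σ => if Equiv.Perm.sign σ = 1 then 1 else τ) ?_,
      fun σ => rfl, ?_, ?_⟩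
    · intro x y
      rcases Int.units_eq_one_or (Equiv.Perm.sign x) with hx | hx <;>
        rcases Int.units_eq_one_or (Equiv.Perm.sign y) with hy | hy <;>
        simp [Equiv.Perm.sign_mul, hx, hy, ← sq, hτ2]
    · intro σ h
      have h' : (if Equiv.Perm.sign σ = 1 then 1 else τ) = σ := h
      by_cases hs : Equiv.Perm.sign σ = 1
      · rw [if_pos hs] at h'
        exact h'.symm
      · rw [if_neg hs] at h'
        rw [← h'] at hs
        exact absurd hsτ hs
    · intro σ π
      by_cases hs : Equiv.Perm.sign σ = 1 <;> by_cases hp : Equiv.Perm.sign π = 1 <;>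
        simp [hs, hp]
  · intro ψ hfpf hab
    have hconj : ∀ g x : Equiv.Perm (Fin n), ψ (g * x * g⁻¹) = ψ x := by
      intro g x
      rw [map_mul, map_mul, map_inv, hab g x, mul_assoc, mul_inv_cancel, mul_one]
    set τ : Equiv.Perm (Fin n) := ψ (Equiv.swap a b) with hτdef
    have hτ2 : τ ^ 2 = 1 := by
      rw [hτdef, ← map_pow, sq, Equiv.swap_mul_self, map_one]
    have hswap : ∀ x y : Fin n, x ≠ y → ψ (Equiv.swap x y) = τ := by
      intro x y hxy
      obtain ⟨g, hg⟩ := isConj_iff.mp (Equiv.Perm.isConj_swap hne hxy)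
      rw [← hg, hconj]
    have hval : ∀ σ : Equiv.Perm (Fin n),
        ψ σ = if Equiv.Perm.sign σ = 1 then 1 else τ := by
      intro σ
      refine Equiv.Perm.swap_induction_on σ (by simp) ?_
      intro f x y hxy ih
      rw [map_mul, hswap x y hxy, ih, Equiv.Perm.sign_mul,
        Equiv.Perm.sign_swap hxy]
      by_cases hf : Equiv.Perm.sign f = 1
      · simp [hf]
      · have : Equiv.Perm.sign f = -1 :=
          (Int.units_eq_one_or _).resolve_left hf
        simp [this, ← sq, hτ2]
    have hsτ : Equiv.Perm.sign τ = 1 := by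
      by_contra hs
      have := hfpf τ (by rw [hval τ, if_neg hs])
      rw [this] at hs
      exact hs (map_one _)
    refine ⟨τ, ⟨Equiv.Perm.mem_alternatingGroup.mpr hsτ, hτ2, hval⟩, ?_⟩
    intro τ' ⟨_, _, hval'⟩
    have h1 := hval' (Equiv.swap a b)
    rw [Equiv.Perm.sign_swap hne] at h1
    rw [if_neg (by decide)] at h1
    exact h1.symm
end

section
/- Let p, q be primes with p ≡ 1 (mod q), and let M = ⟨s, t : s^p = t^q = 1, t s t⁻¹ = s^d⟩ where d has multiplicative order q mod p. If ψ is a nontrivial fixed point free abelian endomorphism of M, then ψ(s) = 1 and ψ(t) = s^i t^j for some 0 ≤ i ≤ p−1 and 2 ≤ j ≤ q−1. -/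
theorem metacyclic_fpf_structure {M : Type*} [Group M] [Fintype M]
    (p q : ℕ) (hp : p.Prime) (hq : q.Prime) (hpq : p % q = 1)
    (d : ℕ) (hd : orderOf (d : ZMod p) = q)
    (s t : M) (hs : s ^ p = 1) (ht : t ^ q = 1) (hst : t * s * t⁻¹ = s ^ d)
    (hcard : Fintype.card M = p * q)
    (hgen : Subgroup.closure ({s, t} : Set M) = ⊤)
    (ψ : M →* M)
    (hnontriv : ∃ g : M, ψ g ≠ 1)
    (hfpf : ∀ g : M, ψ g = g → g = 1)
    (hab : ∀ x y : M, ψ x * ψ y = ψ y * ψ x) :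
    ψ s = 1 ∧ ∃ i j : ℕ, i ≤ p - 1 ∧ 2 ≤ j ∧ j ≤ q - 1 ∧ ψ t = s ^ i * t ^ j := by
  have hp2 : 2 ≤ p := hp.two_le
  have hq2 : 2 ≤ q := hq.two_le
  -- s ≠ 1
  have hs1 : s ≠ 1 := by
    intro h
    have hsub : Subgroup.closure ({s, t} : Set M) ≤ Subgroup.zpowers t := by
      rw [Subgroup.closure_le]
      intro x hx
      simp only [Set.mem_insert_iff, Set.mem_singleton_iff] at hx
      rcases hx with hx | hx
      · rw [hx, h]; exact Subgroup.one_mem _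
      · rw [hx]; exact Subgroup.mem_zpowers t
    rw [hgen] at hsub
    have hall : ∀ g : M, g ∈ Subgroup.zpowers t := fun g => hsub (Subgroup.mem_top g)
    have hord : orderOf t = Nat.card M := orderOf_eq_card_of_forall_mem_zpowers hall
    have hdvd : orderOf t ∣ q := orderOf_dvd_of_pow_eq_one ht
    rw [hord, Nat.card_eq_fintype_card, hcard] at hdvd
    have : p * q ≤ q := Nat.le_of_dvd (by omega) hdvd
    nlinarith
  have hords : orderOf s = p := by
    have hdvd : orderOf s ∣ p := orderOf_dvd_of_pow_eq_one hs
    rcases (Nat.Prime.eq_one_or_self_of_dvd hp _ hdvd) with h | h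
    · exact absurd (orderOf_eq_one_iff.mp h) hs1
    · exact h
  -- d ≥ 1
  have hd1 : 1 ≤ d := by
    by_contra h
    have hd0 : d = 0 := by omega
    rw [hd0, pow_zero] at hst
    rw [mul_inv_eq_iff_eq_mul, one_mul] at hst
    exact hs1 (mul_left_cancel (b := s) (c := 1) (by rw [mul_one]; exact hst))
  -- (d : ZMod p) ≠ 1
  have hdne : (d : ZMod p) ≠ 1 := by
    intro h
    rw [h, orderOf_one] at hd
    omega
  -- ¬ p ∣ d - 1
  have hnd : ¬ p ∣ (d - 1) := by
    intro h
    apply hdne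
    have h0 : ((d - 1 : ℕ) : ZMod p) = 0 := (ZMod.natCast_eq_zero_iff _ _).mpr h
    rw [Nat.cast_sub hd1] at h0
    simpa [sub_eq_zero] using h0
  -- ψ s = 1
  have hψs : ψ s = 1 := by
    have h1 : ψ t * ψ s * (ψ t)⁻¹ = (ψ s) ^ d := by
      rw [← map_pow, ← map_inv, ← map_mul, ← map_mul, hst]
    rw [hab t s] at h1
    rw [mul_assoc, mul_inv_cancel, mul_one] at h1
    have h2 : (ψ s) ^ (d - 1) = 1 := by
      have h3 : (ψ s) ^ (d - 1) * ψ s = (ψ s) ^ d := by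
        rw [← pow_succ]
        congr 1
        omega
      rw [← h1] at h3
      exact mul_right_cancel (by rw [h3, one_mul])
    have hdp : orderOf (ψ s) ∣ p := orderOf_dvd_of_pow_eq_one (by rw [← map_pow, hs, map_one])
    have hdd : orderOf (ψ s) ∣ d - 1 := orderOf_dvd_of_pow_eq_one h2
    have hcop : Nat.Coprime p (d - 1) := (Nat.Prime.coprime_iff_not_dvd hp).mpr hnd
    have : orderOf (ψ s) ∣ 1 := Nat.dvd_gcd hdp hdd |>.trans (dvd_of_eq hcop)
    exact orderOf_eq_one_iff.mp (Nat.dvd_one.mp this)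
  -- swap lemma
  have hts : t * s = s ^ d * t := by
    have := hst
    rw [mul_inv_eq_iff_eq_mul] at this
    exact this
  have h1 : ∀ c : ℕ, t * s ^ c = s ^ (d * c) * t := by
    intro c
    induction c with
    | zero => simp
    | succ n ih =>
      rw [pow_succ, ← mul_assoc, ih, mul_assoc, hts, ← mul_assoc, ← pow_add]
      have he : d * n + d = d * (n + 1) := by ring
      rw [he]
  have hswap : ∀ b c : ℕ, t ^ b * s ^ c = s ^ (c * d ^ b) * t ^ b := by
    intro b
    induction b with
    | zero => simp
    | succ n ih =>
      intro c
      rw [pow_succ, mul_assoc, h1 c, ← mul_assoc, ih, mul_assoc]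
      have he : d * c * d ^ n = c * d ^ (n + 1) := by ring
      rw [he]
  -- representation
  have hrep : ∀ g : M, ∃ a b : ℕ, g = s ^ a * t ^ b := by
    have key : ∀ g ∈ Subgroup.closure ({s, t} : Set M), ∃ a b : ℕ, g = s ^ a * t ^ b := by
      intro g hg
      induction hg using Subgroup.closure_induction with
      | mem x hx =>
        rcases hx with hx | hx
        · exact ⟨1, 0, by simp [hx]⟩
        · simp at hx; exact ⟨0, 1, by simp [hx]⟩
      | one => exact ⟨0, 0, by simp⟩
      | mul x y hx hy ihx ihy =>
        obtain ⟨a, b, rfl⟩ := ihx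
        obtain ⟨c, e, rfl⟩ := ihy
        refine ⟨a + c * d ^ b, b + e, ?_⟩
        calc s ^ a * t ^ b * (s ^ c * t ^ e) = s ^ a * (t ^ b * s ^ c) * t ^ e := by group
          _ = s ^ a * (s ^ (c * d ^ b) * t ^ b) * t ^ e := by rw [hswap b c]
          _ = s ^ (a + c * d ^ b) * t ^ (b + e) := by rw [pow_add, pow_add]; group
      | inv x hx ihx =>
        obtain ⟨a, b, rfl⟩ := ihx
        have hmulpow : ∀ (z : M) (k : ℕ), (∃ a b : ℕ, z = s ^ a * t ^ b) →
            ∃ a b : ℕ, z ^ k = s ^ a * t ^ b := by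
          intro z k hz
          induction k with
          | zero => exact ⟨0, 0, by simp⟩
          | succ n ihn =>
            obtain ⟨a1, b1, hz1⟩ := ihn
            obtain ⟨a2, b2, hz2⟩ := hz
            refine ⟨a1 + a2 * d ^ b1, b1 + b2, ?_⟩
            rw [pow_succ, hz1, hz2]
            calc s ^ a1 * t ^ b1 * (s ^ a2 * t ^ b2)
                = s ^ a1 * (t ^ b1 * s ^ a2) * t ^ b2 := by group
              _ = s ^ a1 * (s ^ (a2 * d ^ b1) * t ^ b1) * t ^ b2 := by rw [hswap b1 a2]
              _ = s ^ (a1 + a2 * d ^ b1) * t ^ (b1 + b2) := by rw [pow_add, pow_add]; group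
        set z := s ^ a * t ^ b
        have hzpos : 0 < orderOf z := orderOf_pos z
        have hinv : z⁻¹ = z ^ (orderOf z - 1) := by
          have hmul : z * z ^ (orderOf z - 1) = 1 := by
            rw [← pow_succ']
            have : orderOf z - 1 + 1 = orderOf z := by omega
            rw [this, pow_orderOf_eq_one]
          exact (eq_inv_of_mul_eq_one_right hmul).symm
        rw [hinv]
        exact hmulpow z _ ⟨a, b, rfl⟩
    intro g
    exact key g (by rw [hgen]; exact Subgroup.mem_top g)
  -- ψ t ≠ 1
  have hψt : ψ t ≠ 1 := by
    intro h
    obtain ⟨g, hg⟩ := hnontriv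
    obtain ⟨a, b, rfl⟩ := hrep g
    apply hg
    rw [map_mul, map_pow, map_pow, hψs, h, one_pow, one_pow, one_mul]
  -- get representation of ψ t
  obtain ⟨a, b, hab'⟩ := hrep (ψ t)
  have hsa : s ^ a = s ^ (a % p) := by
    conv_lhs => rw [← Nat.div_add_mod a p]
    rw [pow_add, pow_mul, hs, one_pow, one_mul]
  have htb : t ^ b = t ^ (b % q) := by
    conv_lhs => rw [← Nat.div_add_mod b q]
    rw [pow_add, pow_mul, ht, one_pow, one_mul]
  set i := a % p with hi
  set j := b % q with hj
  have hψt' : ψ t = s ^ i * t ^ j := by rw [hab', hsa, htb]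
  have hilt : i < p := Nat.mod_lt _ (by omega)
  have hjlt : j < q := Nat.mod_lt _ (by omega)
  -- j ≠ 0
  have hj0 : j ≠ 0 := by
    intro h0
    rw [h0, pow_zero, mul_one] at hψt'
    have hq1 : (ψ t) ^ q = 1 := by rw [← map_pow, ht, map_one]
    rw [hψt', ← pow_mul] at hq1
    have hdvd : p ∣ i * q := by
      rw [← hords]
      exact orderOf_dvd_of_pow_eq_one hq1
    have hpq' : ¬ p ∣ q := by
      intro h
      have := (Nat.prime_dvd_prime_iff_eq hp hq).mp h
      subst this
      simp [Nat.mod_self] at hpq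
    have hpi : p ∣ i := (Nat.Coprime.dvd_of_dvd_mul_right
      ((Nat.Prime.coprime_iff_not_dvd hp).mpr hpq') hdvd)
    have : i = 0 := Nat.eq_zero_of_dvd_of_lt hpi hilt
    rw [this, pow_zero] at hψt'
    exact hψt hψt'
  -- j ≠ 1
  have hj1 : j ≠ 1 := by
    intro h1
    rw [h1, pow_one] at hψt'
    have hfix : ψ (s ^ i * t) = s ^ i * t := by
      rw [map_mul, map_pow, hψs, one_pow, one_mul, hψt']
    have := hfpf _ hfix
    rw [← hψt'] at this
    exact hψt this
  exact ⟨hψs, i, j, by omega, by omega, by omega, hψt'⟩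
end

section
/- Let G be a group and ℬ = (G, ·, ∘) a skew left brace with (G,·) nonabelian. Define R(a,b) = (a⁻¹·(a ∘ b), inv∘(a⁻¹·(a ∘ b)) ∘ a ∘ b) and R'(a,b) = ((a ∘ b)·a⁻¹, inv∘((a ∘ b)·a⁻¹) ∘ a ∘ b), where inv∘ denotes inversion in (G,∘) and a⁻¹ inversion in (G,·). Then R and R' are mutually inverse maps on G × G. -/
theorem brace_solutions_mutually_inverse {G : Type*} [Group G]
    (hnonab : ∃ a b : G, a * b ≠ b * a)
    (circ : G → G → G) (inv2 : G → G)
    (hassoc : ∀ a b c : G, circ (circ a b) c = circ a (circ b c))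
    (hone_left : ∀ a : G, circ 1 a = a)
    (hone_right : ∀ a : G, circ a 1 = a)
    (hinv_left : ∀ a : G, circ (inv2 a) a = 1)
    (hinv_right : ∀ a : G, circ a (inv2 a) = 1)
    (hbrace : ∀ a b c : G, circ a (b * c) = circ a b * a⁻¹ * circ a c) :
    Function.LeftInverse
      (fun p : G × G =>
        (circ p.1 p.2 * p.1⁻¹, circ (inv2 (circ p.1 p.2 * p.1⁻¹)) (circ p.1 p.2)))
      (fun p : G × G =>
        (p.1⁻¹ * circ p.1 p.2, circ (inv2 (p.1⁻¹ * circ p.1 p.2)) (circ p.1 p.2))) ∧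
    Function.RightInverse
      (fun p : G × G =>
        (circ p.1 p.2 * p.1⁻¹, circ (inv2 (circ p.1 p.2 * p.1⁻¹)) (circ p.1 p.2)))
      (fun p : G × G =>
        (p.1⁻¹ * circ p.1 p.2, circ (inv2 (p.1⁻¹ * circ p.1 p.2)) (circ p.1 p.2))) := by
  have hcancel : ∀ u x : G, circ u (circ (inv2 u) x) = x := by
    intro u x
    rw [← hassoc, hinv_right, hone_left]
  have hcancel' : ∀ u x : G, circ (inv2 u) (circ u x) = x := by
    intro u x
    rw [← hassoc, hinv_left, hone_left]
  constructor
  · rintro ⟨a, b⟩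
    simp only [hcancel]
    have h1 : circ a b * (a⁻¹ * circ a b)⁻¹ = a := by group
    rw [h1, hcancel']
  · rintro ⟨a, b⟩
    simp only [hcancel]
    have h1 : (circ a b * a⁻¹)⁻¹ * circ a b = a := by group
    rw [h1, hcancel']
end
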